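/- Let t ∈ ℂ with t ∉ {0, 1, -1}, let s ∈ ℂ satisfy s² = t, and set h := 3(t-1)²/(8t), a₁ := t/(1+t), a₂ := -i·s/(1+t), a₃ := (2-t)/(1+t), and a := (t+1)/2. Consider the 2×2 complex matrix M with rows (a₁(h+1/2), -a₂) and (2a₂h, a₁h + a₃/2). Then M·(2is/(t-1), 1)ᵀ = h_{2,1}(a)·(2is/(t-1), 1)ᵀ and M·(-2is/(3(t-1)), 1)ᵀ = h_{2,3}(a)·(-2is/(3(t-1)), 1)ᵀ; that is, (2is/(t-1), 1) and (-2is/(3(t-1)), 1) are eigenvectors of M with eigenvalues h_{2,1}(a) = (3t-1)/8 and h_{2,3}(a) = (3t-5)(t-3)/(8(t+1)), respectively. -/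
import Mathlib

/-- The Virasoro conformal weight
`h_{r,s}(ℓ) = ((r²-1)/4)·ℓ - (rs-1)/2 + ((s²-1)/4)·ℓ⁻¹`. -/
noncomputable def hvir (ℓ : ℂ) (r s : ℤ) : ℂ :=
  ((r : ℂ) ^ 2 - 1) / 4 * ℓ - ((r : ℂ) * (s : ℂ) - 1) / 2 + ((s : ℂ) ^ 2 - 1) / 4 * ℓ⁻¹

set_option maxHeartbeats 1600000 in
/-- Appendix A eigenvector computation: with `t ∉ {0,1,-1}`, `s² = t`,
`h = 3(t-1)²/(8t)`, `a₁ = t/(1+t)`, `a₂ = -i·s/(1+t)`, `a₃ = (2-t)/(1+t)`,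
`a = (t+1)/2`, the matrix `M` with rows `(a₁(h+1/2), -a₂)` and `(2a₂h, a₁h + a₃/2)`
has eigenvectors `(2is/(t-1), 1)` and `(-2is/(3(t-1)), 1)` with eigenvalues
`h_{2,1}(a) = (3t-1)/8` and `h_{2,3}(a) = (3t-5)(t-3)/(8(t+1))`. -/
theorem L0a_eigenvectors (t : ℂ) (ht0 : t ≠ 0) (ht1 : t ≠ 1) (htm1 : t ≠ -1)
    (s : ℂ) (hs : s ^ 2 = t)
    (h a₁ a₂ a₃ a : ℂ)
    (hh : h = 3 * (t - 1) ^ 2 / (8 * t))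
    (ha₁ : a₁ = t / (1 + t))
    (ha₂ : a₂ = -Complex.I * s / (1 + t))
    (ha₃ : a₃ = (2 - t) / (1 + t))
    (ha : a = (t + 1) / 2)
    (M : Matrix (Fin 2) (Fin 2) ℂ)
    (hM : M = Matrix.of ![![a₁ * (h + 1 / 2), -a₂], ![2 * a₂ * h, a₁ * h + a₃ / 2]]) :
    M.mulVec ![2 * Complex.I * s / (t - 1), 1]
        = hvir a 2 1 • ![2 * Complex.I * s / (t - 1), 1] ∧
    M.mulVec ![-(2 * Complex.I * s) / (3 * (t - 1)), 1]
        = hvir a 2 3 • ![-(2 * Complex.I * s) / (3 * (t - 1)), 1] ∧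
    hvir a 2 1 = (3 * t - 1) / 8 ∧
    hvir a 2 3 = (3 * t - 5) * (t - 3) / (8 * (t + 1)) := by
  subst hs
  have ht1' : s ^ 2 - 1 ≠ 0 := sub_ne_zero.mpr ht1
  have htp1 : s ^ 2 + 1 ≠ 0 := by intro h; apply htm1; linear_combination h
  have hs0 : s ≠ 0 := by intro h; apply ht0; rw [h]; ring
  have hv : s * s⁻¹ = 1 := mul_inv_cancel₀ hs0
  have hw : (s ^ 2 - 1) * (s ^ 2 - 1)⁻¹ = 1 := mul_inv_cancel₀ ht1'
  have hx : (s ^ 2 + 1) * (s ^ 2 + 1)⁻¹ = 1 := mul_inv_cancel₀ htp1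
  have hz : (3 * (s ^ 2 - 1)) * (3 * (s ^ 2 - 1))⁻¹ = 1 :=
    mul_inv_cancel₀ (mul_ne_zero three_ne_zero ht1')
  have hy : ((s ^ 2 + 1) / 2) * ((s ^ 2 + 1) / 2)⁻¹ = 1 :=
    mul_inv_cancel₀ (div_ne_zero htp1 two_ne_zero)
  have hI : Complex.I ^ 2 = -1 := Complex.I_sq
  have h1t : (1 : ℂ) + s ^ 2 ≠ 0 := by intro h; apply htm1; linear_combination h
  subst hh ha₁ ha₂ ha₃ ha hM
  refine ⟨?_, ?_, ?_, ?_⟩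
  · funext i
    fin_cases i
    · simp only [Fin.zero_eta, Fin.mk_one, Matrix.mulVec, dotProduct, Fin.sum_univ_two, Matrix.of_apply,
        Matrix.cons_val', Matrix.cons_val_zero, Matrix.cons_val_one, Matrix.head_cons,
        Matrix.empty_val', Matrix.cons_val_fin_one, Matrix.head_fin_const, Pi.smul_apply,
        smul_eq_mul, hvir]
      push_cast
      simp only [show ((1:ℂ) + s ^ 2) = s ^ 2 + 1 from add_comm 1 (s ^ 2)]
      linear_combination (norm := ring_nf) (0:ℂ) * hI + ((3/4:ℂ)*s*Complex.I*(s^2-1)⁻¹*(s^2+1)⁻¹ + (3/4:ℂ)*s^2*Complex.I*s⁻¹*(s^2-1)⁻¹*(s^2+1)⁻¹ + (-3/2:ℂ)*s^3*Complex.I*(s^2-1)⁻¹*(s^2+1)⁻¹ + (-3/2:ℂ)*s^4*Complex.I*s⁻¹*(s^2-1)⁻¹*(s^2+1)⁻¹ + (3/4:ℂ)*s^5*Complex.I*(s^2-1)⁻¹*(s^2+1)⁻¹ + (3/4:ℂ)*s^6*Complex.I*s⁻¹*(s^2-1)⁻¹*(s^2+1)⁻¹) * hv + ((-3/4:ℂ)*s*Complex.I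 + (-1/4:ℂ)*s*Complex.I*(s^2+1)⁻¹ + (3/4:ℂ)*s^3*Complex.I*(s^2+1)⁻¹) * hw + ((3/4:ℂ)*s*Complex.I + (1/2:ℂ)*s*Complex.I*(s^2-1)⁻¹) * hx
    · simp only [Fin.zero_eta, Fin.mk_one, Matrix.mulVec, dotProduct, Fin.sum_univ_two, Matrix.of_apply,
        Matrix.cons_val', Matrix.cons_val_zero, Matrix.cons_val_one, Matrix.head_cons,
        Matrix.empty_val', Matrix.cons_val_fin_one, Matrix.head_fin_const, Pi.smul_apply,
        smul_eq_mul, hvir]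
      push_cast
      simp only [show ((1:ℂ) + s ^ 2) = s ^ 2 + 1 from add_comm 1 (s ^ 2)]
      linear_combination (norm := ring_nf) ((-3/2:ℂ)*s^2*s⁻¹^2*(s^2-1)⁻¹*(s^2+1)⁻¹ + (3:ℂ)*s^4*s⁻¹^2*(s^2-1)⁻¹*(s^2+1)⁻¹ + (-3/2:ℂ)*s^6*s⁻¹^2*(s^2-1)⁻¹*(s^2+1)⁻¹) * hI + ((3/8:ℂ)*(s^2+1)⁻¹ + (3/2:ℂ)*(s^2-1)⁻¹*(s^2+1)⁻¹ + (3/8:ℂ)*s*s⁻¹*(s^2+1)⁻¹ + (3/2:ℂ)*s*s⁻¹*(s^2-1)⁻¹*(s^2+1)⁻¹ + (-3/4:ℂ)*s^2*(s^2+1)⁻¹ + (-3:ℂ)*s^2*(s^2-1)⁻¹*(s^2+1)⁻¹ + (-3/4:ℂ)*s^3*s⁻¹*(s^2+1)⁻¹ + (-3:ℂ)*s^3*s⁻¹*(s^2-1)⁻¹*(s^2+1)⁻¹ + (3/8:ℂ)*s^4*(s^2+1)⁻¹ + (3/2:ℂ)*s^4*(s^2-1)⁻¹*(s^2+1)⁻¹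 + (3/8:ℂ)*s^5*s⁻¹*(s^2+1)⁻¹ + (3/2:ℂ)*s^5*s⁻¹*(s^2-1)⁻¹*(s^2+1)⁻¹) * hv + ((-3/2:ℂ)*(s^2+1)⁻¹ + (3/2:ℂ)*s^2*(s^2+1)⁻¹) * hw + ((-1/8:ℂ) + (3/8:ℂ)*s^2) * hx
  · funext i
    fin_cases i
    · simp only [Fin.zero_eta, Fin.mk_one, Matrix.mulVec, dotProduct, Fin.sum_univ_two, Matrix.of_apply,
        Matrix.cons_val', Matrix.cons_val_zero, Matrix.cons_val_one, Matrix.head_cons,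
        Matrix.empty_val', Matrix.cons_val_fin_one, Matrix.head_fin_const, Pi.smul_apply,
        smul_eq_mul, hvir]
      push_cast
      simp only [show ((1:ℂ) + s ^ 2) = s ^ 2 + 1 from add_comm 1 (s ^ 2)]
      linear_combination (norm := ring_nf) (0:ℂ) * hI + ((-1/4:ℂ)*s*Complex.I*(s^2-1)⁻¹*(s^2+1)⁻¹ + (-1/4:ℂ)*s^2*Complex.I*s⁻¹*(s^2-1)⁻¹*(s^2+1)⁻¹ + (1/2:ℂ)*s^3*Complex.I*(s^2-1)⁻¹*(s^2+1)⁻¹ + (1/2:ℂ)*s^4*Complex.I*s⁻¹*(s^2-1)⁻¹*(s^2+1)⁻¹ + (-1/4:ℂ)*s^5*Complex.I*(s^2-1)⁻¹*(s^2+1)⁻¹ + (-1/4:ℂ)*s^6*Complex.I*s⁻¹*(s^2-1)⁻¹*(s^2+1)⁻¹) * hv + ((1/4:ℂ)*s*Complex.I + (17/4:ℂ)*s*Complex.I*(3*(s^2-1))⁻¹ + (-5/4:ℂ)*s*Complex.I*(s^2+1)⁻¹ + (-8:ℂ)*s*Complex.I*(s^2+1)⁻¹*(3*(s^2-1))⁻¹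 + (-3/4:ℂ)*s^3*Complex.I*(3*(s^2-1))⁻¹ + (-1/4:ℂ)*s^3*Complex.I*(s^2+1)⁻¹ + (1:ℂ)*s^3*Complex.I*(s^2+1)⁻¹*(3*(s^2-1))⁻¹ + (3/4:ℂ)*s^3*Complex.I*s⁻¹^2*(s^2+1)⁻¹*(3*(s^2-1))⁻¹ + (-3/2:ℂ)*s^5*Complex.I*s⁻¹^2*(s^2+1)⁻¹*(3*(s^2-1))⁻¹ + (3/4:ℂ)*s^7*Complex.I*s⁻¹^2*(s^2+1)⁻¹*(3*(s^2-1))⁻¹) * hw + ((-1/4:ℂ)*s*Complex.I + (7/6:ℂ)*s*Complex.I*(s^2-1)⁻¹) * hx + ((-17/12:ℂ)*s*Complex.I*(s^2-1)⁻¹ + (8/3:ℂ)*s*Complex.I*(s^2-1)⁻¹*(s^2+1)⁻¹ + (1/4:ℂ)*s^3*Complex.I*(s^2-1)⁻¹ + (-1/3:ℂ)*s^3*Complex.I*(s^2-1)⁻¹*(s^2+1)⁻¹ + (-1/4:ℂ)*s^3*Complex.I*s⁻¹^2*(s^2-1)⁻¹*(s^2+1)⁻¹ + (1/2:ℂ)*s^5*Complex.I*s⁻¹^2*(s^2-1)⁻¹*(s^2+1)⁻¹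 + (-1/4:ℂ)*s^7*Complex.I*s⁻¹^2*(s^2-1)⁻¹*(s^2+1)⁻¹) * hz +
        (8:ℂ)*s*Complex.I*(s^2+1)⁻¹*(3*(s^2-1))⁻¹ * hy +
        (-4:ℂ)*s*Complex.I*(3*(s^2-1))⁻¹*((s^2+1)/2)⁻¹ * hx
    · simp only [Fin.zero_eta, Fin.mk_one, Matrix.mulVec, dotProduct, Fin.sum_univ_two, Matrix.of_apply,
        Matrix.cons_val', Matrix.cons_val_zero, Matrix.cons_val_one, Matrix.head_cons,
        Matrix.empty_val', Matrix.cons_val_fin_one, Matrix.head_fin_const, Pi.smul_apply,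
        smul_eq_mul, hvir]
      push_cast
      simp only [show ((1:ℂ) + s ^ 2) = s ^ 2 + 1 from add_comm 1 (s ^ 2)]
      linear_combination (norm := ring_nf) ((1/2:ℂ)*s^2*s⁻¹^2*(s^2-1)⁻¹*(s^2+1)⁻¹ + (-1:ℂ)*s^4*s⁻¹^2*(s^2-1)⁻¹*(s^2+1)⁻¹ + (1/2:ℂ)*s^6*s⁻¹^2*(s^2-1)⁻¹*(s^2+1)⁻¹) * hI + ((3/8:ℂ)*(s^2+1)⁻¹ + (-1/2:ℂ)*(s^2-1)⁻¹*(s^2+1)⁻¹ + (3/8:ℂ)*s*s⁻¹*(s^2+1)⁻¹ + (-1/2:ℂ)*s*s⁻¹*(s^2-1)⁻¹*(s^2+1)⁻¹ + (-3/4:ℂ)*s^2*(s^2+1)⁻¹ + (1:ℂ)*s^2*(s^2-1)⁻¹*(s^2+1)⁻¹ + (-3/4:ℂ)*s^3*s⁻¹*(s^2+1)⁻¹ + (1:ℂ)*s^3*s⁻¹*(s^2-1)⁻¹*(s^2+1)⁻¹ + (3/8:ℂ)*s^4*(s^2+1)⁻¹ + (-1/2:ℂ)*s^4*(s^2-1)⁻¹*(s^2+1)⁻¹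 + (3/8:ℂ)*s^5*s⁻¹*(s^2+1)⁻¹ + (-1/2:ℂ)*s^5*s⁻¹*(s^2-1)⁻¹*(s^2+1)⁻¹) * hv + ((1/2:ℂ)*(s^2+1)⁻¹ + (-1/2:ℂ)*s^2*(s^2+1)⁻¹ + (-3/2:ℂ)*s^2*Complex.I^2*s⁻¹^2*(s^2+1)⁻¹*(3*(s^2-1))⁻¹ + (3:ℂ)*s^4*Complex.I^2*s⁻¹^2*(s^2+1)⁻¹*(3*(s^2-1))⁻¹ + (-3/2:ℂ)*s^6*Complex.I^2*s⁻¹^2*(s^2+1)⁻¹*(3*(s^2-1))⁻¹) * hw + ((-17/8:ℂ) + (3/8:ℂ)*s^2) * hx + ((1/2:ℂ)*s^2*Complex.I^2*s⁻¹^2*(s^2-1)⁻¹*(s^2+1)⁻¹ + (-1:ℂ)*s^4*Complex.I^2*s⁻¹^2*(s^2-1)⁻¹*(s^2+1)⁻¹ + (1/2:ℂ)*s^6*Complex.I^2*s⁻¹^2*(s^2-1)⁻¹*(s^2+1)⁻¹) * hz +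
        (-4:ℂ)*(s^2+1)⁻¹ * hy + (2:ℂ)*((s^2+1)/2)⁻¹ * hx
  · simp only [hvir]; push_cast; field_simp; ring
  · simp only [hvir]; push_cast; field_simp; ring
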